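/- Let Σ be a finite alphabet, v ∉ Σ, and let 𝓕 be a partition regular family of finite subsets of ℕ containing no singletons. Then the family 𝓕'' = {{β ⊎ {(t, v)} : t ∈ F} : β ∈ L(Σ; v), F ∈ 𝓕, dom(β) ∩ F = ∅} is an invariant, adequately partition regular family of finite subsets of the partial semigroup L(Σ ∪ {v}). -/
import Mathlib


open scoped Classical

/-- Located words over alphabet `τ`, as functions `ℕ → Option τ`. -/
abbrev Word (τ : Type*) := ℕ → Option τ

def wDom {τ : Type*} (f : Word τ) : Set ℕ := {n | f n ≠ none}

def IsWord {τ : Type*} (f : Word τ) : Prop := (wDom f).Finite ∧ (wDom f).Nonempty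

/-- The union of two located words. -/
def wUnion {τ : Type*} (f g : Word τ) : Word τ := fun n => (f n).elim (g n) some

/-- The partial semigroup operation `⊎` on located words: defined exactly for
located words with disjoint domains. -/
noncomputable def wOp {τ : Type*} (f g : Word τ) : Option (Word τ) :=
  if IsWord f ∧ IsWord g ∧ Disjoint (wDom f) (wDom g) then some (wUnion f g) else none

/-- `φ(x) = {y : x ⊎ y is defined}`. -/
def phi {τ : Type*} (x : Word τ) : Set (Word τ) := {y | (wOp x y).isSome}

/-- `x⁻¹A = {y ∈ φ(x) : x ⊎ y ∈ A}`. -/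
def invImg {τ : Type*} (x : Word τ) (A : Set (Word τ)) : Set (Word τ) :=
  {y | ∃ z ∈ A, wOp x y = some z}

/-- The sets of the ultrafilter product `p·q = {A : {x : x⁻¹A ∈ q} ∈ p}`. -/
def mulSets {τ : Type*} (p q : Ultrafilter (Word τ)) : Set (Set (Word τ)) :=
  {A | {x | invImg x A ∈ q} ∈ p}

/-- `r` is the product `p·q` in `δL(τ)`. -/
def IsProd {τ : Type*} (p q r : Ultrafilter (Word τ)) : Prop :=
  ∀ A : Set (Word τ), A ∈ r ↔ A ∈ mulSets p q

/-- `δL(τ) ⊆ βL(τ)`: ultrafilters containing `φ(x)` for every located word `x`. -/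
def delta (τ : Type*) : Set (Ultrafilter (Word τ)) :=
  {p | ∀ x : Word τ, IsWord x → phi x ∈ p}

/-- `q` is an idempotent: `q·q = q`. -/
def IsIdem {τ : Type*} (q : Ultrafilter (Word τ)) : Prop := IsProd q q q

/-- `e ≤ f` iff `e·f = f·e = e`. -/
def uLe {τ : Type*} (e f : Ultrafilter (Word τ)) : Prop :=
  IsProd e f e ∧ IsProd f e e

/-- The alphabet `Σ ∪ {v}`; the variable `v` is `Sum.inr ()`. -/
abbrev VLetter (σ : Type*) := σ ⊕ Unit

def vLet {σ : Type*} : VLetter σ := Sum.inr ()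

/-- The variable `v` occurs in `f`. -/
def vOccurs {σ : Type*} (f : Word (VLetter σ)) : Prop := ∃ n, f n = some vLet

/-- The substitution map `θ_s`: replace every occurrence of `v` by `s`. -/
def theta {σ : Type*} (s : σ) (f : Word (VLetter σ)) : Word σ :=
  fun n => (f n).map (fun a => Sum.elim id (fun _ => s) a)

/-- The one-letter located word with domain `{t}` and value `v`. -/
def singleV {σ : Type*} (t : ℕ) : Word (VLetter σ) :=
  fun n => if n = t then some vLet else none

/-- A family of finite subsets of `ℕ` is partition regular if every finite
colouring of `ℕ` admits a monochromatic member. -/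
def PartRegular (𝓕 : Set (Finset ℕ)) : Prop :=
  ∀ (r : ℕ) (c : ℕ → Fin r), ∃ F ∈ 𝓕, ∃ i, ∀ n ∈ F, c n = i

/-- The family `𝓕'' = {{β ⊎ {(t,v)} : t ∈ F} : β ∈ L(Σ;v), F ∈ 𝓕, dom β ∩ F = ∅}`. -/
def Fam'' {σ : Type*} (𝓕 : Set (Finset ℕ)) : Set (Set (Word (VLetter σ))) :=
  {G | ∃ (β : Word (VLetter σ)) (F : Finset ℕ), IsWord β ∧ vOccurs β ∧ F ∈ 𝓕 ∧
    (∀ t ∈ F, β t = none) ∧ G = {w | ∃ t ∈ F, w = wUnion β (singleV t)}}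

section Helpers

variable {τ : Type*}

lemma mem_wDom {f : Word τ} {n : ℕ} : n ∈ wDom f ↔ f n ≠ none := Iff.rfl

lemma wDom_wUnion (f g : Word τ) : wDom (wUnion f g) = wDom f ∪ wDom g := by
  ext n
  simp only [wDom, wUnion, Set.mem_setOf_eq, Set.mem_union]
  cases f n <;> simp

lemma wUnion_assoc (f g h : Word τ) :
    wUnion (wUnion f g) h = wUnion f (wUnion g h) := by
  funext n; simp only [wUnion]; cases f n <;> simp

lemma wUnion_comm {f g : Word τ} (h : Disjoint (wDom f) (wDom g)) :
    wUnion f g = wUnion g f := by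
  funext n
  rcases hf : f n with _ | a <;> rcases hg : g n with _ | b <;>
    simp [wUnion, hf, hg]
  exact absurd (Set.disjoint_left.mp h (show n ∈ wDom f by simp [wDom, hf]))
    (by simp [wDom, hg])

lemma wOp_eq_some {f g : Word τ}
    (h : IsWord f ∧ IsWord g ∧ Disjoint (wDom f) (wDom g)) :
    wOp f g = some (wUnion f g) := by simp [wOp, h]

lemma wOp_isSome {f g : Word τ} (h : (wOp f g).isSome) :
    IsWord f ∧ IsWord g ∧ Disjoint (wDom f) (wDom g) := by
  by_contra hc; simp [wOp, hc] at h

lemma wOp_some {f g z : Word τ} (h : wOp f g = some z) :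
    z = wUnion f g ∧ IsWord f ∧ IsWord g ∧ Disjoint (wDom f) (wDom g) := by
  have hc := wOp_isSome (f := f) (g := g) (by simp [h])
  refine ⟨?_, hc⟩
  rw [wOp_eq_some hc] at h
  exact (Option.some_inj.mp h).symm

lemma isWord_wUnion {f g : Word τ} (hf : IsWord f) (hg : IsWord g) :
    IsWord (wUnion f g) := by
  constructor
  · rw [wDom_wUnion]; exact hf.1.union hg.1
  · rw [wDom_wUnion]; exact hf.2.mono Set.subset_union_left

lemma wDom_singleV {σ : Type*} (t : ℕ) : wDom (singleV (σ := σ) t) = {t} := by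
  ext n; by_cases h : n = t <;> simp [wDom, singleV, h]

lemma isWord_singleV {σ : Type*} (t : ℕ) : IsWord (singleV (σ := σ) t) := by
  constructor
  · rw [wDom_singleV]; exact Set.finite_singleton t
  · rw [wDom_singleV]; exact ⟨t, rfl⟩

end Helpers

/-- If `𝓕` is partition regular and contains no singletons, then `𝓕''` is an
invariant, adequately partition regular family of finite subsets of the
partial semigroup `L(Σ ∪ {v})`. -/
theorem Fam''_invariant_adequatelyPR {σ : Type} [Fintype σ] [Nonempty σ]
    (𝓕 : Set (Finset ℕ)) (hreg : PartRegular 𝓕)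
    (hsing : ∀ a : ℕ, ({a} : Finset ℕ) ∉ 𝓕) :
    -- every member of 𝓕'' is a finite set of located words
    (∀ G ∈ Fam'' (σ := σ) 𝓕, G.Finite ∧ ∀ w ∈ G, IsWord w) ∧
    -- invariance under defined left translations
    (∀ s : Word (VLetter σ), ∀ G ∈ Fam'' (σ := σ) 𝓕,
      (∀ w ∈ G, (wOp s w).isSome) → {z | ∃ w ∈ G, wOp s w = some z} ∈ Fam'' (σ := σ) 𝓕) ∧
    -- invariance under defined right translations
    (∀ s : Word (VLetter σ), ∀ G ∈ Fam'' (σ := σ) 𝓕,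
      (∀ w ∈ G, (wOp w s).isSome) → {z | ∃ w ∈ G, wOp w s = some z} ∈ Fam'' (σ := σ) 𝓕) ∧
    -- adequate partition regularity
    (∀ X : Finset (Word (VLetter σ)), (∀ x ∈ X, IsWord x) →
      ∀ (r : ℕ) (c : Word (VLetter σ) → Fin r),
        ∃ G ∈ Fam'' (σ := σ) 𝓕, G ⊆ (⋂ x ∈ X, phi x) ∧ ∃ i, ∀ w ∈ G, c w = i) := by
  refine ⟨?_, ?_, ?_, ?_⟩
  · -- part 1: finite sets of words
    rintro G ⟨β, F, hβw, -, -, -, rfl⟩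
    constructor
    · have himg : {w | ∃ t ∈ F, w = wUnion β (singleV t)} =
          (fun t => wUnion β (singleV t)) '' (F : Set ℕ) := by
        ext w
        simp only [Set.mem_image, Finset.mem_coe, Set.mem_setOf_eq]
        constructor
        · rintro ⟨t, ht, rfl⟩; exact ⟨t, ht, rfl⟩
        · rintro ⟨t, ht, rfl⟩; exact ⟨t, ht, rfl⟩
      rw [himg]
      exact F.finite_toSet.image _
    · rintro w ⟨t, -, rfl⟩
      exact isWord_wUnion hβw (isWord_singleV t)
  · -- part 2: left translations
    rintro s G ⟨β, F, hβw, hβv, hF, hβF, rfl⟩ hdef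
    have key : ∀ t ∈ F, IsWord s ∧ Disjoint (wDom s) (wDom β) ∧ s t = none := by
      intro t ht
      have h := wOp_isSome (hdef _ ⟨t, ht, rfl⟩)
      rw [wDom_wUnion, wDom_singleV] at h
      obtain ⟨hs, -, hd⟩ := h
      refine ⟨hs, hd.mono_right Set.subset_union_left, ?_⟩
      have : t ∉ wDom s := Set.disjoint_right.mp hd (Set.mem_union_right _ rfl)
      simpa [mem_wDom] using this
    rcases F.eq_empty_or_nonempty with hFe | ⟨t0, ht0⟩
    · subst hFe
      refine ⟨β, ∅, hβw, hβv, hF, by simp, ?_⟩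
      ext z; simp
    · obtain ⟨hs, hd, -⟩ := key t0 ht0
      have hsn : ∀ n ∈ wDom β, s n = none := by
        intro n hn
        have := Set.disjoint_right.mp hd hn
        simpa [mem_wDom] using this
      refine ⟨wUnion s β, F, isWord_wUnion hs hβw, ?_, hF, ?_, ?_⟩
      · obtain ⟨n, hn⟩ := hβv
        refine ⟨n, ?_⟩
        have hsnone : s n = none := hsn n (by simp [mem_wDom, hn])
        simp [wUnion, hsnone, hn]
      · intro t ht
        obtain ⟨-, -, hst⟩ := key t ht
        simp [wUnion, hst, hβF t ht]
      · ext z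
        constructor
        · rintro ⟨w, ⟨t, ht, rfl⟩, hop⟩
          obtain ⟨rfl, -⟩ := wOp_some hop
          exact ⟨t, ht, (wUnion_assoc s β (singleV t)).symm⟩
        · rintro ⟨t, ht, rfl⟩
          refine ⟨wUnion β (singleV t), ⟨t, ht, rfl⟩, ?_⟩
          rw [wOp_eq_some (wOp_isSome (hdef _ ⟨t, ht, rfl⟩)), wUnion_assoc]
  · -- part 3: right translations
    rintro s G ⟨β, F, hβw, hβv, hF, hβF, rfl⟩ hdef
    have key : ∀ t ∈ F, IsWord s ∧ Disjoint (wDom β) (wDom s) ∧ s t = none ∧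
        Disjoint (wDom (singleV (σ := σ) t)) (wDom s) := by
      intro t ht
      have h := wOp_isSome (hdef _ ⟨t, ht, rfl⟩)
      rw [wDom_wUnion] at h
      obtain ⟨-, hs, hd⟩ := h
      refine ⟨hs, hd.mono_left Set.subset_union_left, ?_,
        hd.mono_left Set.subset_union_right⟩
      have : t ∉ wDom s := Set.disjoint_left.mp hd
        (Set.mem_union_right _ (by rw [wDom_singleV]; rfl))
      simpa [mem_wDom] using this
    rcases F.eq_empty_or_nonempty with hFe | ⟨t0, ht0⟩
    · subst hFe
      refine ⟨β, ∅, hβw, hβv, hF, by simp, ?_⟩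
      ext z; simp
    · obtain ⟨hs, hd, -, -⟩ := key t0 ht0
      have hz : ∀ t ∈ F, wUnion (wUnion β (singleV (σ := σ) t)) s
          = wUnion (wUnion β s) (singleV t) := by
        intro t ht
        obtain ⟨-, -, -, hdt⟩ := key t ht
        rw [wUnion_assoc, wUnion_comm hdt, ← wUnion_assoc]
      refine ⟨wUnion β s, F, isWord_wUnion hβw hs, ?_, hF, ?_, ?_⟩
      · obtain ⟨n, hn⟩ := hβv
        exact ⟨n, by simp [wUnion, hn]⟩
      · intro t ht
        obtain ⟨-, -, hst, -⟩ := key t ht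
        simp [wUnion, hst, hβF t ht]
      · ext z
        constructor
        · rintro ⟨w, ⟨t, ht, rfl⟩, hop⟩
          obtain ⟨rfl, -⟩ := wOp_some hop
          exact ⟨t, ht, hz t ht⟩
        · rintro ⟨t, ht, rfl⟩
          refine ⟨wUnion β (singleV t), ⟨t, ht, rfl⟩, ?_⟩
          rw [wOp_eq_some (wOp_isSome (hdef _ ⟨t, ht, rfl⟩)), hz t ht]
  · -- part 4: adequate partition regularity
    intro X hX r c
    rcases r with - | r
    · exact (c fun _ => none).elim0
    have hDset : (⋃ x ∈ X, wDom x).Finite :=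
      Set.Finite.biUnion X.finite_toSet (fun x hx => (hX x hx).1)
    obtain ⟨m, hm'⟩ := hDset.infinite_compl.nonempty
    have hDf : (insert m (⋃ x ∈ X, wDom x)).Finite := hDset.insert m
    set D : Finset ℕ := hDf.toFinset with hD
    have hmD : m ∈ D := by simp [hD, Set.Finite.mem_toFinset]
    set c' : ℕ → Fin (r + 1 + D.card) := fun n =>
      if h : n ∈ D then Fin.natAdd (r + 1) (D.equivFin ⟨n, h⟩)
      else Fin.castAdd D.card (c (wUnion (singleV m) (singleV n))) with hc'
    obtain ⟨F, hF, i, hi⟩ := hreg _ c'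
    by_cases hFD : ∃ d ∈ F, d ∈ D
    · exfalso
      obtain ⟨d, hdF, hdD⟩ := hFD
      have hFd : F = {d} := by
        apply Finset.eq_singleton_iff_unique_mem.mpr
        refine ⟨hdF, fun n hn => ?_⟩
        have h1 : c' n = c' d := (hi n hn).trans (hi d hdF).symm
        by_cases hnD : n ∈ D
        · simp only [hc', dif_pos hnD, dif_pos hdD] at h1
          have hval := congrArg Fin.val h1
          simp only [Fin.coe_natAdd] at hval
          have heq : D.equivFin ⟨n, hnD⟩ = D.equivFin ⟨d, hdD⟩ := Fin.ext (by omega)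
          exact Subtype.ext_iff.mp (D.equivFin.injective heq)
        · exfalso
          simp only [hc', dif_neg hnD, dif_pos hdD] at h1
          have hval := congrArg Fin.val h1
          simp only [Fin.coe_castAdd, Fin.coe_natAdd] at hval
          have := (c (wUnion (singleV m) (singleV n))).isLt
          omega
      exact hsing d (hFd ▸ hF)
    · push_neg at hFD
      have hFm : ∀ t ∈ F, singleV (σ := σ) m t = none := by
        intro t ht
        have htm : t ≠ m := fun h => hFD t ht (h ▸ hmD)
        simp [singleV, htm]
      refine ⟨{w | ∃ t ∈ F, w = wUnion (singleV m) (singleV t)},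
        ⟨singleV m, F, isWord_singleV m, ⟨m, by simp [singleV]⟩, hF, hFm, rfl⟩, ?_, ?_⟩
      · rintro w ⟨t, ht, rfl⟩
        simp only [Set.mem_iInter]
        intro x hx
        have hxd : wDom x ⊆ ⋃ x ∈ X, wDom x := Set.subset_biUnion_of_mem hx
        have hdisj : Disjoint (wDom x)
            (wDom (wUnion (singleV (σ := σ) m) (singleV t))) := by
          rw [wDom_wUnion, wDom_singleV, wDom_singleV, Set.disjoint_right]
          intro n hn
          rcases hn with hn | hn
          · rw [Set.mem_singleton_iff] at hn; subst hn
            exact fun hmem => hm' (hxd hmem)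
          · rw [Set.mem_singleton_iff] at hn; subst hn
            intro hmem
            exact hFD n ht (by
              rw [hD, Set.Finite.mem_toFinset]
              exact Set.mem_insert_iff.mpr (Or.inr (hxd hmem)))
        show (wOp x _).isSome
        rw [wOp_eq_some ⟨hX x hx,
          isWord_wUnion (isWord_singleV m) (isWord_singleV t), hdisj⟩]
        rfl
      · rcases F.eq_empty_or_nonempty with hFe | ⟨t0, ht0⟩
        · exact ⟨0, by rintro w ⟨t, ht, rfl⟩; simp [hFe] at ht⟩
        · refine ⟨c (wUnion (singleV m) (singleV t0)), ?_⟩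
          rintro w ⟨t, ht, rfl⟩
          have h1 : c' t = c' t0 := (hi t ht).trans (hi t0 ht0).symm
          simp only [hc', dif_neg (hFD t ht), dif_neg (hFD t0 ht0)] at h1
          have hval := congrArg Fin.val h1
          simp only [Fin.coe_castAdd] at hval
          exact Fin.ext hval
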